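/- arXiv:2104.07883 — 3 statements merged into one kernel-verified Lean document; each statement's English description precedes it below -/
import Mathlib

section
/- Let C be an irreducible component of a general KCM with infection probability q and let x be a site in the closure {η}_L^ω (which is the same for all η ∈ C). Then for every fixed ξ ∈ ∏_{y∈L∖{x}} S_y such that the event {η ∈ C, η_{L∖{x}} = ξ} has positive π_L-probability, either every η ∈ C with η_{L∖{x}} = ξ satisfies η_x ∈ I_x, or the conditional law of η_x under π_L(·|C, η_{L∖{x}} = ξ) equals π_x. In particular, π_L(η_x ∈ I_x | C, η_{L∖{x}} = ξ) ≥ q. -/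
/-!
Suppose some configuration `η'` of the component agrees with `η` off `x` and is healthy at `x`.
Since `x` is in the closure, there is a path inside the component from `η'` to a configuration
where the constraint at `x` holds. Up to the first time this constraint holds, no transition
updates `x`, and since `x` stays healthy the constraints checked along the way do not involve
`x`; so the path can be replayed after resampling `x`, then `x` flipped and the path undone.
Hence every `update η x s` lies in the component, the conditioning on the component is void on
this fibre, and the conditional law at `x` is `π x`. Otherwise the fibre is entirely infected at
`x` and the conditional probability of infection is `1 ≥ q`.
-/

open scoped Classical

namespace KCM

/-- A full configuration assigns a state to every site of `ℤ`.  The boundary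
condition is the restriction of a configuration outside the volume. -/
abbrev Config (S : ℤ → Type) : Type := ∀ x : ℤ, S x

variable {S : ℤ → Type}

/-- The constraint at site `x` is satisfied in configuration `η`: some update
rule of `x` has all its sites infected. -/
def Constraint (I : ∀ x : ℤ, Set (S x)) (U : ℤ → Finset (Finset ℤ)) (x : ℤ)
    (η : Config S) : Prop :=
  ∃ u ∈ U x, ∀ y ∈ u, η y ∈ I y

/-- A legal transition of the KCM on volume `L`: the two configurations agree
off a single site `x ∈ L` whose constraint is satisfied. -/
def Step (I : ∀ x : ℤ, Set (S x)) (U : ℤ → Finset (Finset ℤ)) (L : Finset ℤ)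
    (η η' : Config S) : Prop :=
  ∃ x ∈ L, Constraint I U x η ∧ ∀ y : ℤ, y ≠ x → η' y = η y

/-- `η` and `η'` belong to the same irreducible component of the KCM on volume
`L` (connected component of the transition graph on configurations). -/
def Reach (I : ∀ x : ℤ, Set (S x)) (U : ℤ → Finset (Finset ℤ)) (L : Finset ℤ)
    (η η' : Config S) : Prop :=
  Relation.ReflTransGen (fun ζ ζ' => Step I U L ζ ζ' ∨ Step I U L ζ' ζ) η η'

/-- The closure `{η}_L^ω`: the set of sites of `L` whose state can eventually
be updated starting from `η`. -/
def closure (I : ∀ x : ℤ, Set (S x)) (U : ℤ → Finset (Finset ℤ)) (L : Finset ℤ)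
    (η : Config S) : Set ℤ :=
  {x | x ∈ L ∧ ∃ η', Reach I U L η η' ∧ Constraint I U x η'}

/-- Replace the states of `η` inside `Λ` by `ξ`. -/
def glue (Λ : Finset ℤ) (η : Config S) (ξ : ∀ x : {y : ℤ // y ∈ Λ}, S x.1) :
    Config S :=
  fun x => if h : x ∈ Λ then ξ ⟨x, h⟩ else η x

variable [∀ x, Fintype (S x)]

/-- Expectation of `f` when the states of `η` inside `Λ` are resampled from the
product of the measures `π x`, `x ∈ Λ`, conditioned on the event `P`. -/
noncomputable def expOn (π : ∀ x : ℤ, S x → ℝ) (Λ : Finset ℤ)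
    (P : Config S → Prop) (η : Config S) (f : Config S → ℝ) : ℝ :=
  (∑ ξ : ∀ x : {y : ℤ // y ∈ Λ}, S x.1,
      if P (glue Λ η ξ) then (∏ x : {y : ℤ // y ∈ Λ}, π x.1 (ξ x)) * f (glue Λ η ξ) else 0) /
  (∑ ξ : ∀ x : {y : ℤ // y ∈ Λ}, S x.1,
      if P (glue Λ η ξ) then (∏ x : {y : ℤ // y ∈ Λ}, π x.1 (ξ x)) else 0)

/-- Variance of `f` when the states of `η` inside `Λ` are resampled from the
product of the measures `π x`, `x ∈ Λ`, conditioned on the event `P`. -/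
noncomputable def varOn (π : ∀ x : ℤ, S x → ℝ) (Λ : Finset ℤ)
    (P : Config S → Prop) (η : Config S) (f : Config S → ℝ) : ℝ :=
  expOn π Λ P η (fun ζ => (f ζ - expOn π Λ P η f) ^ 2)

end KCM

namespace KCM

open Function

variable {S : ℤ → Type} {I : ∀ x : ℤ, Set (S x)} {U : ℤ → Finset (Finset ℤ)}
  {L : Finset ℤ} {x z : ℤ} {a c : Config S}

lemma update_eq_update_of_eq_off {b : Config S} (h : ∀ y, y ≠ x → a y = b y) (s : S x) :
    update a x s = update b x s := by
  ext y
  by_cases hy : y = x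
  · subst hy; simp
  · simp [update_of_ne hy, h y hy]

lemma Constraint.update_of_notMem (hc : Constraint I U z a) (hax : a x ∉ I x) (s : S x) :
    Constraint I U z (update a x s) := by
  obtain ⟨u, hu, hsat⟩ := hc
  refine ⟨u, hu, fun y hy => ?_⟩
  have hyx : y ≠ x := by rintro rfl; exact hax (hsat y hy)
  rw [update_of_ne hyx]
  exact hsat y hy

lemma Constraint.of_eq_off (hz : ∀ u ∈ U z, z ∉ u) (hca : ∀ y, y ≠ z → c y = a y)
    (hc : Constraint I U z a) : Constraint I U z c := by
  obtain ⟨u, hu, hsat⟩ := hc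
  refine ⟨u, hu, fun y hy => ?_⟩
  rw [hca y (ne_of_mem_of_not_mem hy (hz u hu))]
  exact hsat y hy

lemma reach_symm (h : Reach I U L a c) : Reach I U L c a :=
  Std.Symm.symm (r := Relation.ReflTransGen (Relation.SymmGen (Step I U L))) a c h

lemma reach_update_of_constraint (hxL : x ∈ L) (hc : Constraint I U x a) (s : S x) :
    Reach I U L a (update a x s) :=
  .single (.inl ⟨x, hxL, hc, fun _ hy => update_of_ne hy _ _⟩)

lemma step_update (hzL : z ∈ L) (hc : Constraint I U z a) (hca : ∀ y, y ≠ z → c y = a y)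
    (hzx : z ≠ x) (hax : a x ∉ I x) (s : S x) :
    Step I U L (update a x s) (update c x s) := by
  refine ⟨z, hzL, hc.update_of_notMem hax s, fun y hy => ?_⟩
  by_cases hyx : y = x
  · subst hyx; simp
  · simp [update_of_ne hyx, hca y hy]

lemma symmGen_step_update_of_not_constraint (hUx : ∀ u ∈ U x, x ∉ u)
    (h : Relation.SymmGen (Step I U L) a c) (hxa : ¬ Constraint I U x a) (hax : a x ∉ I x)
    (s : S x) :
    c x = a x ∧ Relation.SymmGen (Step I U L) (update a x s) (update c x s) := by
  rcases h with ⟨z, hzL, hc, hca⟩ | ⟨z, hzL, hc, hac⟩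
  · have hzx : z ≠ x := by rintro rfl; exact hxa hc
    exact ⟨hca x hzx.symm, .inl (step_update hzL hc hca hzx hax s)⟩
  · have hzx : z ≠ x := by
      rintro rfl
      exact hxa (hc.of_eq_off hUx hac)
    have hcx : c x = a x := (hac x hzx.symm).symm
    exact ⟨hcx, .inr (step_update hzL hc hac hzx (hcx ▸ hax) s)⟩

lemma reach_update_of_notMem (hxL : x ∈ L) (hUx : ∀ u ∈ U x, x ∉ u) {ζ : Config S}
    (hζ : Reach I U L a ζ) (hζx : Constraint I U x ζ) (hax : a x ∉ I x) (s : S x) :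
    Reach I U L a (update a x s) := by
  induction hζ using Relation.ReflTransGen.head_induction_on with
  | refl => exact reach_update_of_constraint hxL hζx s
  | @head a c hac _ ih =>
    by_cases hxa : Constraint I U x a
    · exact reach_update_of_constraint hxL hxa s
    obtain ⟨hcx, hstep⟩ := symmGen_step_update_of_not_constraint hUx hac hxa hax s
    have hc : Reach I U L c (update c x s) := ih (hcx ▸ hax)
    have hback : Reach I U L (update c x s) (update a x s) := reach_symm (.single hstep)
    exact (Relation.ReflTransGen.single hac : Reach I U L a c).trans (hc.trans hback)

lemma glue_of_notMem (Λ : Finset ℤ) (η : Config S) (ξ : ∀ x : {y : ℤ // y ∈ Λ}, S x.1)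
    {y : ℤ} (hy : y ∉ Λ) : glue Λ η ξ y = η y :=
  dif_neg hy

lemma glue_self (Λ : Finset ℤ) (η : Config S) : glue Λ η (fun y => η y.1) = η := by
  funext y
  by_cases hy : y ∈ Λ <;> simp [glue, hy]

lemma glue_singleton (η : Config S) (ξ : ∀ y : ({x} : Finset ℤ), S y.1) :
    glue {x} η ξ = update η x (ξ default) := by
  funext y
  by_cases hy : y = x
  · subst hy; simp [glue]; rfl
  · simp [glue, hy]

variable [∀ x, Fintype (S x)] {π : ∀ x : ℤ, S x → ℝ} {P : Config S → Prop} {η : Config S}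
  {f : Config S → ℝ}

lemma expOn_eq_one {Λ : Finset ℤ} (hπ : ∀ x s, 0 < π x s) (hη : P η)
    (hf : ∀ ξ, P (glue Λ η ξ) → f (glue Λ η ξ) = 1) : expOn π Λ P η f = 1 := by
  have hden : 0 < ∑ ξ : ∀ y : Λ, S y.1, if P (glue Λ η ξ) then ∏ y, π y.1 (ξ y) else 0 := by
    refine Finset.sum_pos' (fun ξ _ => ?_) ⟨fun y => η y.1, Finset.mem_univ _, ?_⟩
    · split_ifs
      exacts [Finset.prod_nonneg fun y _ => (hπ _ _).le, le_rfl]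
    · rw [glue_self, if_pos hη]
      exact Finset.prod_pos fun y _ => hπ _ _
  unfold expOn
  rw [div_eq_one_iff_eq hden.ne']
  refine Finset.sum_congr rfl fun ξ _ => ?_
  split_ifs with h
  · rw [hf ξ h, mul_one]
  · rfl

lemma expOn_singleton :
    expOn π {x} P η f =
      (∑ s, if P (update η x s) then π x s * f (update η x s) else 0) /
        ∑ s, if P (update η x s) then π x s else 0 := by
  unfold expOn
  simp only [glue_singleton, Fintype.prod_unique]
  congr 1 <;> exact Fintype.sum_equiv (Equiv.piUnique _) _ _ fun ξ => rfl

lemma expOn_singleton_of_forall (hπ : ∑ s, π x s = 1) (hP : ∀ s, P (update η x s)) :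
    expOn π {x} P η f = ∑ s, π x s * f (update η x s) := by
  simp only [expOn_singleton, hP, if_true, hπ, div_one]

theorem statement4_general (S : ℤ → Type) [∀ x, Fintype (S x)] (L : Finset ℤ)
    (q : ℝ)
    (hq1 : q ≤ 1)
    (π : ∀ x : ℤ, S x → ℝ) (I : ∀ x : ℤ, Set (S x)) (U : ℤ → Finset (Finset ℤ))
    (hπpos : ∀ (x : ℤ) (s : S x), 0 < π x s)
    (hπsum : ∀ x : ℤ, ∑ s : S x, π x s = 1)
    (hπI : ∀ x : ℤ, q ≤ ∑ s : S x, if s ∈ I x then π x s else 0)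
    (hUx : ∀ x ∈ L, ∀ u ∈ U x, x ∉ u)
    (η₀ : Config S) (x : ℤ) (hx : x ∈ closure I U L η₀)
    (η : Config S) (hη : Reach I U L η₀ η) :
    ((∀ η' : Config S, Reach I U L η₀ η' → (∀ y : ℤ, y ≠ x → η' y = η y) →
        η' x ∈ I x) ∨
      (∀ s : S x,
        expOn π {x} (Reach I U L η₀) η (fun ζ => if ζ x = s then (1 : ℝ) else 0) =
          π x s)) ∧
      q ≤ expOn π {x} (Reach I U L η₀) η (fun ζ => if ζ x ∈ I x then (1 : ℝ) else 0) := by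
  obtain ⟨hxL, ζ, hζ, hζx⟩ := hx
  by_cases hinfected : ∀ η' : Config S, Reach I U L η₀ η' →
      (∀ y : ℤ, y ≠ x → η' y = η y) → η' x ∈ I x
  · refine ⟨.inl hinfected, ?_⟩
    rwa [expOn_eq_one hπpos hη fun ξ hξ =>
      if_pos (hinfected _ hξ fun y hy => glue_of_notMem _ _ _ (by simpa using hy))]
  push Not at hinfected
  obtain ⟨η', hη', hη'η, hη'x⟩ := hinfected
  have hfibre : ∀ s, Reach I U L η₀ (update η x s) := fun s =>
    update_eq_update_of_eq_off hη'η s ▸ hη'.trans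
      (reach_update_of_notMem hxL (hUx x hxL) ((reach_symm hη').trans hζ) hζx hη'x s)
  refine ⟨.inr fun s => ?_, ?_⟩
  · simp [expOn_singleton_of_forall (hπsum x) hfibre]
  · simpa [expOn_singleton_of_forall (hπsum x) hfibre] using hπI x

/-- For `x` in the closure and any configuration `η` of the
irreducible component of `η₀` (fixing `ξ = η` off `x`): either all elements of
the component agreeing with `η` off `x` are infected at `x`, or the conditional
law of the state at `x` given the rest and the component is `π x`; in both
cases the conditional probability of infection at `x` is at least `q`. -/
theorem statement4 (S : ℤ → Type) [∀ x, Fintype (S x)] (L : Finset ℤ)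
    (q R : ℝ)
    (hq0 : 0 < q) (hq1 : q ≤ 1) (hR : 1 ≤ R)
    (π : ∀ x : ℤ, S x → ℝ) (I : ∀ x : ℤ, Set (S x)) (U : ℤ → Finset (Finset ℤ))
    (hπpos : ∀ (x : ℤ) (s : S x), 0 < π x s)
    (hπsum : ∀ x : ℤ, ∑ s : S x, π x s = 1)
    (hπI : ∀ x : ℤ, q ≤ ∑ s : S x, if s ∈ I x then π x s else 0)
    (hUx : ∀ x ∈ L, ∀ u ∈ U x, x ∉ u)
    (hUR : ∀ x ∈ L, ∀ u ∈ U x, ∀ y ∈ u, ((|y - x| : ℤ) : ℝ) ≤ R)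
    (η₀ : Config S) (x : ℤ) (hx : x ∈ closure I U L η₀)
    (η : Config S) (hη : Reach I U L η₀ η) :
    ((∀ η' : Config S, Reach I U L η₀ η' → (∀ y : ℤ, y ≠ x → η' y = η y) →
        η' x ∈ I x) ∨
      (∀ s : S x,
        expOn π {x} (Reach I U L η₀) η (fun ζ => if ζ x = s then (1 : ℝ) else 0) =
          π x s)) ∧
      q ≤ expOn π {x} (Reach I U L η₀) η (fun ζ => if ζ x ∈ I x then (1 : ℝ) else 0) :=
  statement4_general S L q hq1 π I U hπpos hπsum hπI hUx η₀ x hx η hη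

end KCM
end

section
/- For every configuration η ∈ S_L of a general KCM there exists a configuration η* in the same irreducible component as η such that η*_x ∈ I_x for every x ∈ {η}_L^ω; that is, the whole closure can be simultaneously infected within the irreducible component. -/
/-!
Constraints are monotone in the set of infected sites. Hence, along a path from `ζ` to
`η'`, overriding every configuration by the infected sites of `ζ` keeps each move legal:
from `ζ` one reaches a configuration that is infected wherever `ζ` or `η'` is. The
closure is then infected one site `x` at a time: from the current configuration, go to a
configuration where the constraint of `x` holds, without losing any infection, and infect
`x`.
-/

open scoped Classical

theorem Set.nonempty_of_pos_le_sum_ite {α : Type*} [Fintype α] {A : Set α} {f : α → ℝ}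
    {q : ℝ} (hq : 0 < q) (h : q ≤ ∑ s, if s ∈ A then f s else 0) : A.Nonempty := by
  by_contra hA
  simp only [Set.not_nonempty_iff_eq_empty.mp hA, Set.mem_empty_iff_false, if_false,
    Finset.sum_const_zero] at h
  linarith

namespace KCM

variable {S : ℤ → Type}

noncomputable def mergeInfected (I : ∀ x : ℤ, Set (S x)) (ζ η : Config S) : Config S :=
  fun y => if ζ y ∈ I y then ζ y else η y

section Dynamics

variable {I : ∀ x : ℤ, Set (S x)} {U : ℤ → Finset (Finset ℤ)} {L : Finset ℤ}

theorem Constraint.mono {x : ℤ} {η ζ : Config S} (hηζ : ∀ y, η y ∈ I y → ζ y ∈ I y)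
    (h : Constraint I U x η) : Constraint I U x ζ := by
  obtain ⟨u, hu, hinf⟩ := h
  exact ⟨u, hu, fun y hy => hηζ y (hinf y hy)⟩

theorem mergeInfected_mem_of_left {ζ η : Config S} {y : ℤ} (h : ζ y ∈ I y) :
    mergeInfected I ζ η y ∈ I y := by
  simp only [mergeInfected, if_pos h]
  exact h

theorem mergeInfected_mem_of_right {ζ η : Config S} {y : ℤ} (h : η y ∈ I y) :
    mergeInfected I ζ η y ∈ I y := by
  unfold mergeInfected
  split_ifs with hζ
  exacts [hζ, h]

theorem mergeInfected_self (ζ : Config S) : mergeInfected I ζ ζ = ζ := by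
  funext y
  simp only [mergeInfected, ite_self]

/-- Legal because infecting more sites only helps constraints. -/
theorem Step.mergeInfected_left {η η' : Config S} (ζ : Config S) (h : Step I U L η η') :
    Step I U L (mergeInfected I ζ η) (mergeInfected I ζ η') := by
  obtain ⟨x, hxL, hx, hηη'⟩ := h
  refine ⟨x, hxL, hx.mono fun y => mergeInfected_mem_of_right, fun y hy => ?_⟩
  simp only [mergeInfected, hηη' y hy]

theorem Reach.mergeInfected_left {η η' : Config S} (ζ : Config S) (h : Reach I U L η η') :
    Reach I U L (mergeInfected I ζ η) (mergeInfected I ζ η') :=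
  h.lift _ fun _ _ hstep =>
    hstep.imp (Step.mergeInfected_left ζ) (Step.mergeInfected_left ζ)

theorem Reach.mergeInfected {ζ η' : Config S} (h : Reach I U L ζ η') :
    Reach I U L ζ (mergeInfected I ζ η') := by
  simpa only [mergeInfected_self] using h.mergeInfected_left ζ

theorem Reach.symm {η η' : Config S} (h : Reach I U L η η') : Reach I U L η' η := by
  induction h with
  | refl => exact .refl
  | tail _ hstep ih => exact ih.head hstep.symm

theorem exists_reach_forall_infected (hI : ∀ x, (I x).Nonempty) (η : Config S)
    (T : Finset ℤ) (hT : ∀ x ∈ T, x ∈ closure I U L η) :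
    ∃ ζ, Reach I U L η ζ ∧ ∀ x ∈ T, ζ x ∈ I x := by
  induction T using Finset.induction_on with
  | empty => exact ⟨η, .refl, by simp⟩
  | insert x T _ ih =>
    obtain ⟨ζ, hηζ, hζT⟩ := ih fun y hy => hT y (Finset.mem_insert_of_mem hy)
    obtain ⟨hxL, η', hηη', hx⟩ := hT x (Finset.mem_insert_self x T)
    set μ := mergeInfected I ζ η'
    have hζμ : Reach I U L ζ μ := Reach.mergeInfected (hηζ.symm.trans hηη')
    have hμx : Constraint I U x μ := hx.mono fun y => mergeInfected_mem_of_right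
    obtain ⟨t, ht⟩ := hI x
    refine ⟨Function.update μ x t,
      (hηζ.trans hζμ).tail (Or.inl ⟨x, hxL, hμx, fun y hy => Function.update_of_ne hy _ _⟩),
      ?_⟩
    rintro y hy
    by_cases hyx : y = x
    · subst hyx
      simpa using ht
    · rw [Function.update_of_ne hyx]
      exact mergeInfected_mem_of_left (hζT y ((Finset.mem_insert.mp hy).resolve_left hyx))

end Dynamics

theorem statement7_general (S : ℤ → Type) [∀ x, Fintype (S x)] (L : Finset ℤ)
    (q : ℝ)
    (hq0 : 0 < q)
    (π : ∀ x : ℤ, S x → ℝ) (I : ∀ x : ℤ, Set (S x)) (U : ℤ → Finset (Finset ℤ))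
    (hπI : ∀ x : ℤ, q ≤ ∑ s : S x, if s ∈ I x then π x s else 0)
    (η : Config S) :
    ∃ ηstar : Config S, Reach I U L η ηstar ∧
      ∀ x ∈ closure I U L η, ηstar x ∈ I x := by
  have hI : ∀ x, (I x).Nonempty := fun x => Set.nonempty_of_pos_le_sum_ite hq0 (hπI x)
  obtain ⟨ζ, hηζ, hζ⟩ :=
    exists_reach_forall_infected hI η (L.filter (· ∈ closure I U L η)) fun x hx =>
      (Finset.mem_filter.mp hx).2
  exact ⟨ζ, hηζ, fun x hx => hζ x (Finset.mem_filter.mpr ⟨hx.1, hx⟩)⟩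

/-- The whole closure can be simultaneously infected within
the irreducible component. -/
theorem statement7 (S : ℤ → Type) [∀ x, Fintype (S x)] (L : Finset ℤ)
    (q R : ℝ)
    (hq0 : 0 < q) (hq1 : q ≤ 1) (hR : 1 ≤ R)
    (π : ∀ x : ℤ, S x → ℝ) (I : ∀ x : ℤ, Set (S x)) (U : ℤ → Finset (Finset ℤ))
    (hπpos : ∀ (x : ℤ) (s : S x), 0 < π x s)
    (hπsum : ∀ x : ℤ, ∑ s : S x, π x s = 1)
    (hπI : ∀ x : ℤ, q ≤ ∑ s : S x, if s ∈ I x then π x s else 0)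
    (hUx : ∀ x ∈ L, ∀ u ∈ U x, x ∉ u)
    (hUR : ∀ x ∈ L, ∀ u ∈ U x, ∀ y ∈ u, ((|y - x| : ℤ) : ℝ) ≤ R)
    (η : Config S) :
    ∃ ηstar : Config S, Reach I U L η ηstar ∧
      ∀ x ∈ closure I U L η, ηstar x ∈ I x :=
  statement7_general S L q hq0 π I U hπI η

end KCM
end

section
/- Consider a general KCM on the volume L₁ = {1,…,ℓ} whose rules are contained in L₁ ∪ (ℤ∖L₁) with boundary condition ζ, with range R. Let θ ∈ S_{L₁}, let x ∈ L₁ with B = {x−R,…,x+R} ⊆ L₁, and suppose that every site of B ∩ {θ}_{L₁}^ζ is infected in θ. Then the closure splits at x: (i) {θ}_{L₁}^ζ ∩ {1,…,x} equals the closure of θ_{{1,…,x}} for the KCM on volume {1,…,x} with boundary condition θ_{{x+1,…,ℓ}}·ζ, and (ii) {θ}_{L₁}^ζ ∩ {x,…,ℓ} equals the closure of θ_{{x,…,ℓ}} for the KCM on volume {x,…,ℓ} with boundary condition θ_{{1,…,x−1}}·ζ. -/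
open scoped Classical

namespace KCM

variable {S : ℤ → Type}

variable [∀ x, Fintype (S x)]

section Aux

variable (I : ∀ x : ℤ, Set (S x)) (U : ℤ → Finset (Finset ℤ))

lemma reach_mono {L L' : Finset ℤ} (hLL : L' ⊆ L) {η η' : Config S}
    (h : Reach I U L' η η') : Reach I U L η η' := by
  induction h with
  | refl => exact .refl
  | tail _ hstep ih =>
      refine ih.tail ?_
      rcases hstep with ⟨w, hw, hc, he⟩ | ⟨w, hw, hc, he⟩
      · exact Or.inl ⟨w, hLL hw, hc, he⟩
      · exact Or.inr ⟨w, hLL hw, hc, he⟩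

lemma ne_theta_mem_closure {L : Finset ℤ} {θ η : Config S}
    (h : Reach I U L θ η) : ∀ z, η z ≠ θ z → z ∈ closure I U L θ := by
  induction h with
  | refl => intro z hz; exact absurd rfl hz
  | @tail b c hb hstep ih =>
      intro z hz
      rcases hstep with ⟨w, hw, hc, he⟩ | ⟨w, hw, hc, he⟩
      · by_cases hzw : z = w
        · exact hzw ▸ ⟨hw, b, hb, hc⟩
        · exact ih z (by rw [he z hzw] at hz; exact hz)
      · by_cases hzw : z = w
        · exact hzw ▸ ⟨hw, c, hb.tail (Or.inr ⟨w, hw, hc, he⟩), hc⟩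
        · exact ih z (by rw [he z hzw]; exact hz)

/-- Reset the states outside `L'` to those of `θ`. -/
noncomputable def proj (L' : Finset ℤ) (θ η : Config S) : Config S :=
  fun z => if z ∈ L' then η z else θ z

lemma constraint_proj {L L' : Finset ℤ} {θ : Config S}
    (hgood : ∀ y ∈ L', ∀ u ∈ U y, ∀ z ∈ u, z ∉ L' →
      z ∈ closure I U L θ → θ z ∈ I z)
    {η : Config S} (hη : Reach I U L θ η) {y : ℤ} (hy : y ∈ L')
    (hc : Constraint I U y η) : Constraint I U y (proj L' θ η) := by
  obtain ⟨u, hu, hall⟩ := hc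
  refine ⟨u, hu, fun z hz => ?_⟩
  by_cases hzL : z ∈ L'
  · simpa [proj, hzL] using hall z hz
  · simp only [proj, hzL, if_false]
    by_cases hzθ : η z = θ z
    · exact hzθ ▸ hall z hz
    · exact hgood y hy u hu z hz hzL (ne_theta_mem_closure I U hη z hzθ)

lemma reach_proj {L L' : Finset ℤ} {θ : Config S}
    (hgood : ∀ y ∈ L', ∀ u ∈ U y, ∀ z ∈ u, z ∉ L' →
      z ∈ closure I U L θ → θ z ∈ I z)
    {η : Config S} (hη : Reach I U L θ η) :
    Reach I U L' θ (proj L' θ η) := by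
  have hθ : proj L' θ θ = θ := funext fun z => by by_cases h : z ∈ L' <;> simp [proj, h]
  induction hη with
  | refl => rw [hθ]; exact .refl
  | @tail b c hb hstep ih =>
      rcases hstep with ⟨w, hw, hc, he⟩ | ⟨w, hw, hc, he⟩
      · by_cases hwL : w ∈ L'
        · refine ih.tail (Or.inl ⟨w, hwL, constraint_proj I U hgood hb hwL hc,
            fun y hy => ?_⟩)
          by_cases hyL : y ∈ L' <;> simp [proj, hyL, he y hy]
        · have heq : proj L' θ c = proj L' θ b := funext fun z => by
            by_cases hzL : z ∈ L'
            · simp only [proj, hzL, if_true]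
              exact he z (fun h => hwL (h ▸ hzL))
            · simp [proj, hzL]
          rw [heq]; exact ih
      · have hcre : Reach I U L θ c := hb.tail (Or.inr ⟨w, hw, hc, he⟩)
        by_cases hwL : w ∈ L'
        · refine ih.tail (Or.inr ⟨w, hwL, constraint_proj I U hgood hcre hwL hc,
            fun y hy => ?_⟩)
          by_cases hyL : y ∈ L' <;> simp [proj, hyL, he y hy]
        · have heq : proj L' θ c = proj L' θ b := funext fun z => by
            by_cases hzL : z ∈ L'
            · simp only [proj, hzL, if_true]
              exact (he z (fun h => hwL (h ▸ hzL))).symm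
            · simp [proj, hzL]
          rw [heq]; exact ih

lemma closure_split {L L' : Finset ℤ} (hLL : L' ⊆ L) {θ : Config S}
    (hgood : ∀ y ∈ L', ∀ u ∈ U y, ∀ z ∈ u, z ∉ L' →
      z ∈ closure I U L θ → θ z ∈ I z) :
    closure I U L θ ∩ ↑L' = closure I U L' θ := by
  ext y
  constructor
  · rintro ⟨⟨hyL, η, hη, hc⟩, hyL'⟩
    have hyL'' : y ∈ L' := hyL'
    exact ⟨hyL'', proj L' θ η, reach_proj I U hgood hη,
      constraint_proj I U hgood hη hyL'' hc⟩
  · rintro ⟨hyL', η, hη, hc⟩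
    exact ⟨⟨hLL hyL', η, reach_mono I U hLL hη, hc⟩, hyL'⟩

end Aux

/-- Closure splitting at a block whose closure-sites are all
infected: the closure on `L₁ = {1,…,ℓ}` splits into the closures on the
volumes `{1,…,x}` and `{x,…,ℓ}` with the induced boundary conditions. -/
theorem statement9 (S : ℤ → Type) [∀ x, Fintype (S x)] (ℓ : ℤ)
    (q : ℝ) (R : ℕ)
    (hq0 : 0 < q) (hq1 : q ≤ 1) (hR : 1 ≤ R)
    (π : ∀ x : ℤ, S x → ℝ) (I : ∀ x : ℤ, Set (S x)) (U : ℤ → Finset (Finset ℤ))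
    (hπpos : ∀ (x : ℤ) (s : S x), 0 < π x s)
    (hπsum : ∀ x : ℤ, ∑ s : S x, π x s = 1)
    (hπI : ∀ x : ℤ, q ≤ ∑ s : S x, if s ∈ I x then π x s else 0)
    (hUx : ∀ x ∈ Finset.Icc (1 : ℤ) ℓ, ∀ u ∈ U x, x ∉ u)
    (hUR : ∀ x ∈ Finset.Icc (1 : ℤ) ℓ, ∀ u ∈ U x, ∀ y ∈ u, |y - x| ≤ (R : ℤ))
    (θ : Config S) (x : ℤ) (hx : x ∈ Finset.Icc (1 : ℤ) ℓ)
    (hB : Finset.Icc (x - (R : ℤ)) (x + (R : ℤ)) ⊆ Finset.Icc (1 : ℤ) ℓ)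
    (hinf : ∀ y ∈ Finset.Icc (x - (R : ℤ)) (x + (R : ℤ)),
      y ∈ closure I U (Finset.Icc (1 : ℤ) ℓ) θ → θ y ∈ I y) :
    closure I U (Finset.Icc (1 : ℤ) ℓ) θ ∩ ↑(Finset.Icc (1 : ℤ) x) =
        closure I U (Finset.Icc (1 : ℤ) x) θ ∧
      closure I U (Finset.Icc (1 : ℤ) ℓ) θ ∩ ↑(Finset.Icc x ℓ) =
        closure I U (Finset.Icc x ℓ) θ := by
  rw [Finset.mem_Icc] at hx
  constructor
  · refine closure_split I U (Finset.Icc_subset_Icc le_rfl hx.2) ?_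
    intro y hy u hu z hz hzL' hzC
    have hzL : z ∈ Finset.Icc (1 : ℤ) ℓ := hzC.1
    have hyL : y ∈ Finset.Icc (1 : ℤ) ℓ :=
      Finset.Icc_subset_Icc le_rfl hx.2 hy
    have hzy := hUR y hyL u hu z hz
    rw [abs_le] at hzy
    rw [Finset.mem_Icc] at hy hzL
    rw [Finset.mem_Icc] at hzL'
    exact hinf z (Finset.mem_Icc.mpr (by omega)) hzC
  · refine closure_split I U (Finset.Icc_subset_Icc hx.1 le_rfl) ?_
    intro y hy u hu z hz hzL' hzC
    have hzL : z ∈ Finset.Icc (1 : ℤ) ℓ := hzC.1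
    have hyL : y ∈ Finset.Icc (1 : ℤ) ℓ :=
      Finset.Icc_subset_Icc hx.1 le_rfl hy
    have hzy := hUR y hyL u hu z hz
    rw [abs_le] at hzy
    rw [Finset.mem_Icc] at hy hzL
    rw [Finset.mem_Icc] at hzL'
    exact hinf z (Finset.mem_Icc.mpr (by omega)) hzC

end KCM
end
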